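/- arXiv:2602.12904 — 6 statements merged into one kernel-verified Lean document; each statement's English description precedes it below -/
import Mathlib

section
/- Fix integers d ≥ 1 and m with m ≥ 2L for a real L > 0, set γ = 2L/(3m), T = (m+1)^d, and equip ℝ^d with the sup metric d_∞(x,y) = max_i |x_i − y_i|. Consider any deterministic full-feedback pricing algorithm, i.e., for each t ∈ {1,…,T} a function π_t : ([0,1]^d)^t × ([0,1]^2)^{t−1} → ℝ mapping the observed contexts x_1,…,x_t and the past valuation pairs (s_1,b_1),…,(s_{t−1},b_{t−1}) to a posted price p_t. Then there exist L-Lipschitz (with respect to d_∞) functions f_s, f_b : [0,1]^d → [0,1] and T pairwise distinct contexts x_1,…,x_T ∈ [0,1]^d such that, with s_t = f_s(x_t), b_t = f_b(x_t) and p_t = π_t(x_1,…,x_t,(s_1,b_1),…,(s_{t−1},b_{t−1})), the cumulative regret satisfies ∑_{t=1}^T ( max(b_t − s_t, 0) − 𝟙(s_t ≤ p_t ≤ b_t)·(b_t − s_t) ) ≥ (L/6)·T^{(d−1)/d}. (Deterministic-algorithm form of the paper's lower bound Theorem 5.1: any algorithm under strong budget balance with d-dimensional contexts and L-Lipschitz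 valuations suffers regret Ω(L·T^{(d−1)/d}), even with full feedback.) -/
/-!
The contexts are the `(m + 1)^d` points of the grid `{0, 1/m, …, 1}^d`, any two of which are at
sup-distance at least `1/m`. With `h = L / (2m)`, each round is given one of the valuation pairs
`(0, h)` and `(2h, 3h)`. A deterministic algorithm's price is a function of what it has seen so
far, so the adversary can choose the pair of round `t` after computing the price: if the price lies
in `[0, h]` it plays `(2h, 3h)`, otherwise `(0, h)`. No trade ever happens and every round costs
`h`. The seller valuations chosen on the grid take two values `2h` apart on `1/m`-separated
points, so they extend (McShane) to an `L`-Lipschitz function with values in `[0, 2h]`, and the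
buyer valuation is that function plus `h`. The total regret is `(m + 1)^d · L / (2m)`, which is at
least `(L/6) · T^((d-1)/d)`.
-/

open Set NNReal

theorem LipschitzOnWith.of_separated {α : Type*} [PseudoMetricSpace α] {f : α → ℝ} {s : Set α}
    {K : ℝ≥0} {δ a b : ℝ} (hs : s.Pairwise fun x y => δ ≤ dist x y) (hf : MapsTo f s (Icc a b))
    (hab : b - a ≤ K * δ) : LipschitzOnWith K f s := by
  refine LipschitzOnWith.of_dist_le_mul fun x hx y hy => ?_
  obtain rfl | hxy := eq_or_ne x y
  · simp
  calc dist (f x) (f y) ≤ b - a := Real.dist_le_of_mem_Icc (hf hx) (hf hy)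
    _ ≤ K * δ := hab
    _ ≤ K * dist x y := by gcongr; exact hs hx hy hxy

theorem LipschitzOnWith.exists_lipschitzWith_mapsTo_Icc {α : Type*} [PseudoMetricSpace α]
    {f : α → ℝ} {s : Set α} {K : ℝ≥0} {a b : ℝ} (hf : LipschitzOnWith K f s)
    (hfs : MapsTo f s (Icc a b)) (hab : a ≤ b) :
    ∃ g : α → ℝ, LipschitzWith K g ∧ EqOn f g s ∧ ∀ y, g y ∈ Icc a b := by
  obtain ⟨g, hg, hfg⟩ := hf.extend_real
  refine ⟨fun y => max (min b (g y)) a, (hg.const_min b).max_const a, fun y hy => ?_,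
    fun y => ⟨le_max_right _ _, max_le (min_le_left _ _) hab⟩⟩
  simp only [← hfg hy, min_eq_right (hfs hy).2, max_eq_left (hfs hy).1]

theorem Real.pow_rpow_sub_one_div_natCast {x : ℝ} (hx : 0 ≤ x) {n : ℕ} (hn : n ≠ 0) :
    (x ^ n) ^ (((n : ℝ) - 1) / n) = x ^ (n - 1) := by
  rw [← Real.rpow_natCast x n, ← Real.rpow_mul hx, mul_div_cancel₀ _ (Nat.cast_ne_zero.mpr hn),
    ← Real.rpow_natCast, Nat.cast_sub (Nat.one_le_iff_ne_zero.mpr hn), Nat.cast_one]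

noncomputable def gridPoint (m d t : ℕ) : Fin d → ℝ :=
  fun i => ((t / (m + 1) ^ (i : ℕ) % (m + 1) : ℕ) : ℝ) / m

theorem gridPoint_mem_Icc (m d t : ℕ) : gridPoint m d t ∈ Icc 0 1 := by
  refine ⟨fun i => by simp only [gridPoint]; positivity,
    fun i => div_le_one_of_le₀ ?_ (Nat.cast_nonneg m)⟩
  exact Nat.cast_le.mpr (Nat.le_of_lt_succ (Nat.mod_lt _ m.succ_pos))

theorem inv_le_dist_gridPoint {m d t t' : ℕ} (ht : t < (m + 1) ^ d) (ht' : t' < (m + 1) ^ d)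
    (hne : t ≠ t') : (m : ℝ)⁻¹ ≤ dist (gridPoint m d t) (gridPoint m d t') := by
  obtain ⟨i, hi⟩ : ∃ i, finFunctionFinEquiv.symm ⟨t, ht⟩ i ≠ finFunctionFinEquiv.symm ⟨t', ht'⟩ i :=
    Function.ne_iff.mp <| finFunctionFinEquiv.symm.injective.ne (by simpa using hne)
  rw [Ne, Fin.ext_iff, finFunctionFinEquiv_symm_apply_val, finFunctionFinEquiv_symm_apply_val] at hi
  refine le_trans ?_ (dist_le_pi_dist _ _ i)
  rw [gridPoint, gridPoint, Real.dist_eq, div_sub_div_same, abs_div, Nat.abs_cast, inv_eq_one_div]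
  gcongr
  exact_mod_cast Int.one_le_abs (sub_ne_zero.mpr (Int.natCast_inj.not.mpr hi))

theorem gridPoint_injOn {m : ℕ} (hm : 0 < m) (d : ℕ) :
    InjOn (gridPoint m d) (Iio ((m + 1) ^ d)) := by
  intro t ht t' ht' heq
  by_contra hne
  have := inv_le_dist_gridPoint ht ht' hne
  rw [heq, dist_self] at this
  exact this.not_gt (by positivity)

theorem exists_lipschitzWith_gridPoint {K : ℝ≥0} {m : ℕ} (hm : 0 < m) (d : ℕ) {c : ℝ}
    (hc₀ : 0 ≤ c) (hc : c ≤ K / m) (σ : ℕ → Bool) :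
    ∃ g : (Fin d → ℝ) → ℝ, LipschitzWith K g ∧ (∀ y, g y ∈ Icc 0 c) ∧
      ∀ t < (m + 1) ^ d, g (gridPoint m d t) = if σ t then c else 0 := by
  set S := gridPoint m d '' {t | t < (m + 1) ^ d ∧ σ t}
  have hsep : (gridPoint m d '' Iio ((m + 1) ^ d)).Pairwise fun y y' => (m : ℝ)⁻¹ ≤ dist y y' := by
    rintro _ ⟨t, ht, rfl⟩ _ ⟨t', ht', rfl⟩ hne
    exact inv_le_dist_gridPoint ht ht' (ne_of_apply_ne _ hne)
  have hS : ∀ y, S.indicator (fun _ => c) y ∈ Icc 0 c := fun y => by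
    by_cases hy : y ∈ S <;> simp [hy, hc₀]
  obtain ⟨g, hg, hfg, hg_mem⟩ := (LipschitzOnWith.of_separated hsep (fun y _ => hS y)
    (by rwa [sub_zero, ← div_eq_mul_inv])).exists_lipschitzWith_mapsTo_Icc (fun y _ => hS y) hc₀
  refine ⟨g, hg, hg_mem, fun t ht => ?_⟩
  rw [← hfg (mem_image_of_mem _ ht)]
  cases hσ : σ t
  · refine indicator_of_notMem ?_ _
    rintro ⟨t', ⟨ht', hσ'⟩, heq⟩
    rw [gridPoint_injOn hm d ht' ht heq, hσ] at hσ'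
    exact Bool.false_ne_true hσ'
  · exact indicator_of_mem (show gridPoint m d t ∈ S from ⟨t, ⟨ht, hσ⟩, rfl⟩) _

def seqOfHistory {α : Type*} (F : (t : ℕ) → (Fin t → α) → α) (t : ℕ) : α :=
  F t fun i => seqOfHistory F i
termination_by t
decreasing_by exact i.2

theorem seqOfHistory_apply {α : Type*} (F : (t : ℕ) → (Fin t → α) → α) (t : ℕ) :
    seqOfHistory F t = F t fun i => seqOfHistory F i := by
  rw [seqOfHistory]

def valuationPair (h : ℝ) (σ : Bool) : ℝ × ℝ := if σ then (2 * h, 3 * h) else (0, h)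

theorem valuationPair_eq (h : ℝ) (σ : Bool) :
    valuationPair h σ = ((if σ then 2 * h else 0), (if σ then 2 * h else 0) + h) := by
  cases σ
  · simp [valuationPair]
  · simp only [valuationPair, if_true]; ring_nf

/-- `v = (s, b)` is the pair of seller and buyer valuations. -/
noncomputable def regret (p : ℝ) (v : ℝ × ℝ) : ℝ :=
  max (v.2 - v.1) 0 - if v.1 ≤ p ∧ p ≤ v.2 then v.2 - v.1 else 0

theorem regret_valuationPair_decide {h : ℝ} (hh : 0 < h) (p : ℝ) :
    regret p (valuationPair h (decide (p ∈ Icc 0 h))) = h := by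
  by_cases hp : p ∈ Icc 0 h
  · have hno_trade : ¬(2 * h ≤ p ∧ p ≤ 3 * h) := fun hc => by linarith [hp.2, hc.1]
    simp only [regret, valuationPair, hp, decide_true, if_true, if_neg hno_trade]
    rw [max_eq_left (by linarith)]
    ring
  · simp only [regret, valuationPair, hp, decide_false, Bool.false_eq_true, if_false,
      if_neg (show ¬(0 ≤ p ∧ p ≤ h) from hp)]
    rw [max_eq_left (by linarith)]
    ring

section Adversary

variable {X : Type*} (π : (t : ℕ) → (Fin (t + 1) → X) → (Fin t → ℝ × ℝ) → ℝ) (x : ℕ → X)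

/-- Bit `t` is chosen knowing the price that `π` posts in round `t`, so that this price misses the
valuation pair of the round. -/
noncomputable def adversaryBits (h : ℝ) : ℕ → Bool :=
  seqOfHistory fun t hist =>
    decide (π t (fun i => x i) (fun i => valuationPair h (hist i)) ∈ Icc 0 h)

theorem sum_regret_adversaryBits {h : ℝ} (hh : 0 < h) {T : ℕ} (v : X → ℝ × ℝ)
    (hv : ∀ t < T, v (x t) = valuationPair h (adversaryBits π x h t)) :
    ∑ t ∈ Finset.range T, regret (π t (fun i => x i) fun i => v (x i)) (v (x t)) = T * h := by
  have hround : ∀ t ∈ Finset.range T,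
      regret (π t (fun i => x i) fun i => v (x i)) (v (x t)) = h := by
    intro t ht
    have hhist : (fun i : Fin t => v (x i)) =
        fun i : Fin t => valuationPair h (adversaryBits π x h i) :=
      funext fun i => hv i (i.2.trans (Finset.mem_range.mp ht))
    rw [hv t (Finset.mem_range.mp ht), hhist, adversaryBits, seqOfHistory_apply]
    exact regret_valuationPair_decide hh _
  rw [Finset.sum_congr rfl hround, Finset.sum_const, Finset.card_range, nsmul_eq_mul]

end Adversary

theorem div_six_mul_rpow_le_mul_div {d m : ℕ} (hd : d ≠ 0) (hm : 0 < m) {L : ℝ} (hL : 0 ≤ L) :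
    L / 6 * (((m + 1) ^ d : ℕ) : ℝ) ^ (((d : ℝ) - 1) / d) ≤ ((m + 1) ^ d : ℕ) * (L / (2 * m)) := by
  have hm' : (0 : ℝ) < m := Nat.cast_pos.mpr hm
  rw [Nat.cast_pow, Nat.cast_succ, Real.pow_rpow_sub_one_div_natCast (by positivity) hd,
    ← pow_sub_one_mul hd ((m : ℝ) + 1), mul_comm (L / 6), mul_assoc]
  gcongr
  rw [mul_div_assoc', le_div_iff₀ (by positivity)]
  nlinarith
/-- deterministic-algorithm form of the lower bound, Theorem 5.1.
Contexts live in `[0,1]^d ⊆ Fin d → ℝ`, equipped with the sup metric (the product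
metric on `Fin d → ℝ` is exactly `d_∞`).  A deterministic full-feedback algorithm is
a family `π t` mapping the contexts `x_0, …, x_t` observed so far and the past
valuation pairs `(s_0, b_0), …, (s_{t-1}, b_{t-1})` to a posted price.  For
`T = (m+1)^d` rounds there are `L`-Lipschitz valuation functions `fs, fb` with values
in `[0,1]` and pairwise distinct contexts forcing regret at least
`(L/6) · T^((d-1)/d)`. -/
theorem stmt_0 (d m T : ℕ) (L : ℝ)
    (hd : 1 ≤ d) (hL : 0 < L) (hm : 2 * L ≤ (m : ℝ))
    (hT : T = (m + 1) ^ d)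
    (π : (t : ℕ) → (Fin (t + 1) → (Fin d → ℝ)) → (Fin t → ℝ × ℝ) → ℝ) :
    ∃ (fs fb : (Fin d → ℝ) → ℝ) (x : ℕ → (Fin d → ℝ)),
      (∀ y ∈ Set.Icc (0 : Fin d → ℝ) 1, fs y ∈ Set.Icc (0 : ℝ) 1) ∧
      (∀ y ∈ Set.Icc (0 : Fin d → ℝ) 1, fb y ∈ Set.Icc (0 : ℝ) 1) ∧
      (∀ y ∈ Set.Icc (0 : Fin d → ℝ) 1, ∀ y' ∈ Set.Icc (0 : Fin d → ℝ) 1,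
        |fs y - fs y'| ≤ L * dist y y') ∧
      (∀ y ∈ Set.Icc (0 : Fin d → ℝ) 1, ∀ y' ∈ Set.Icc (0 : Fin d → ℝ) 1,
        |fb y - fb y'| ≤ L * dist y y') ∧
      (∀ t < T, x t ∈ Set.Icc (0 : Fin d → ℝ) 1) ∧
      (∀ t < T, ∀ t' < T, t ≠ t' → x t ≠ x t') ∧
      (L / 6) * (T : ℝ) ^ (((d : ℝ) - 1) / (d : ℝ)) ≤
        ∑ t ∈ Finset.range T,
          (max (fb (x t) - fs (x t)) 0 -
            (if fs (x t) ≤ π t (fun i => x i) (fun i => (fs (x i), fb (x i))) ∧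
                π t (fun i => x i) (fun i => (fs (x i), fb (x i))) ≤ fb (x t)
             then fb (x t) - fs (x t) else 0)) := by
  subst hT
  have hm0 : 0 < m := Nat.cast_pos.mp (by linarith : (0 : ℝ) < m)
  set h := L / (2 * m)
  have hh : 0 < h := by positivity
  have h3h : 3 * h ≤ 1 := by
    rw [← mul_div_assoc, div_le_one (by positivity)]; linarith
  obtain ⟨g, hg_lip, hg_mem, hg_grid⟩ := exists_lipschitzWith_gridPoint (K := L.toNNReal) hm0 d
    (by positivity : 0 ≤ 2 * h) (le_of_eq (by simp only [Real.coe_toNNReal L hL.le, h]; field_simp))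
    (adversaryBits π (gridPoint m d) h)
  have hlip : ∀ y y', |g y - g y'| ≤ L * dist y y' := fun y y' => by
    simpa [Real.coe_toNNReal L hL.le, Real.dist_eq] using hg_lip.dist_le_mul y y'
  refine ⟨g, fun y => g y + h, gridPoint m d, fun y _ => ⟨(hg_mem y).1, by linarith [(hg_mem y).2]⟩,
    fun y _ => ⟨by linarith [(hg_mem y).1], by linarith [(hg_mem y).2]⟩,
    fun y _ y' _ => hlip y y', fun y _ y' _ => by simpa using hlip y y',
    fun t _ => gridPoint_mem_Icc m d t, fun t ht t' ht' => (gridPoint_injOn hm0 d).ne ht ht', ?_⟩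
  exact (div_six_mul_rpow_le_mul_div (by omega) hm0 hL.le).trans_eq
    (sum_regret_adversaryBits π _ hh (fun y => (g y, g y + h))
      fun t ht => by rw [valuationPair_eq, ← hg_grid t ht]).symm
end

section
/- Let d ≥ 1 be an integer, L > 0, ℓ ≥ 1 an integer, and equip ℝ^d with the sup metric d_∞(x,y) = max_i |x_i − y_i|. Let f_s, f_b : [0,1]^d → [0,1] be L-Lipschitz with respect to d_∞. Let R ⊆ R' ⊆ [0,1]^d be sets with d_∞-diameter of R' at most 2^{−(ℓ−1)} and d_∞-diameter of R at most 2^{−ℓ}. Suppose there exist x̄ ∈ R' and p̄ ∈ [0,1] with f_s(x̄) ≤ p̄ ≤ f_b(x̄), and set p_L = max(0, p̄ − L·2^{−(ℓ−1)}) and p_U = min(1, p̄ + L·2^{−(ℓ−1)}). Suppose further there exist x_L, x_U ∈ R such that the trade at price p_L is rejected at x_L (i.e., not f_s(x_L) ≤ p_L ≤ f_b(x_L)) and the trade at price p_U is rejected at x_U (i.e., not f_s(x_U) ≤ p_U ≤ f_b(x_U)). Then for every x ∈ R it holds that f_b(x) − f_s(x) ≤ 6·L·2^{−ℓ}. -/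
/-!
Since the parent price `pb` was accepted at `xb` and `R ⊆ R'`, Lipschitz continuity keeps
`fb ≥ pL` and `fs ≤ pU` on `R`, so the rejections can only mean `fs xL > pL ≥ pb - 2Lε` and
`fb xU < pU ≤ pb + 2Lε`, where `ε = 2^{-ℓ}`. Moving from `xL`, `xU` to any `x ∈ R` costs at
most `Lε` more on each side, so `fb x - fs x < 4Lε + 2Lε`.
-/

open scoped NNReal

section

variable {α : Type*} [PseudoMetricSpace α] {K : ℝ≥0} {f fs fb : α → ℝ} {s : Set α}
  {x y : α} {r a pb : ℝ}

lemma LipschitzOnWith.le_add_of_dist_le (hf : LipschitzOnWith K f s) (hx : x ∈ s) (hy : y ∈ s)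
    (hxy : dist x y ≤ r) : f x ≤ f y + K * r := by
  have h := hf.dist_le_mul x hx y hy
  rw [Real.dist_eq] at h
  linarith [le_abs_self (f x - f y), mul_le_mul_of_nonneg_left hxy K.coe_nonneg]

lemma lt_of_not_accept_lower_probe (hfb : LipschitzOnWith K fb s) (hx : x ∈ s) (hy : y ∈ s)
    (hxy : dist y x ≤ r) (hacc : pb ≤ fb y) (ha : a ≤ fb x)
    (hrej : ¬(fs x ≤ max a (pb - K * r) ∧ max a (pb - K * r) ≤ fb x)) :
    pb - K * r < fs x := by
  have hle : max a (pb - K * r) ≤ fb x :=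
    max_le ha (by linarith [hfb.le_add_of_dist_le hy hx hxy])
  have hlt : max a (pb - K * r) < fs x := lt_of_not_ge fun h => hrej ⟨h, hle⟩
  exact (le_max_right _ _).trans_lt hlt

lemma lt_of_not_accept_upper_probe (hfs : LipschitzOnWith K fs s) (hx : x ∈ s) (hy : y ∈ s)
    (hxy : dist x y ≤ r) (hacc : fs y ≤ pb) (ha : fs x ≤ a)
    (hrej : ¬(fs x ≤ min a (pb + K * r) ∧ min a (pb + K * r) ≤ fb x)) :
    fb x < pb + K * r := by
  have hle : fs x ≤ min a (pb + K * r) :=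
    le_min ha (by linarith [hfs.le_add_of_dist_le hx hy hxy])
  have hlt : fb x < min a (pb + K * r) := lt_of_not_ge fun h => hrej ⟨hle, h⟩
  exact hlt.trans_le (min_le_right _ _)

end

theorem stmt_5_general (d : ℕ) (L : ℝ) (hL : 0 < L) (ℓ : ℕ)
    (fs fb : (Fin d → ℝ) → ℝ)
    (hrange : ∀ x ∈ Set.Icc (0 : Fin d → ℝ) 1,
      fs x ∈ Set.Icc (0 : ℝ) 1 ∧ fb x ∈ Set.Icc (0 : ℝ) 1)
    (hlip : ∀ x ∈ Set.Icc (0 : Fin d → ℝ) 1, ∀ y ∈ Set.Icc (0 : Fin d → ℝ) 1,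
      |fs x - fs y| ≤ L * dist x y ∧ |fb x - fb y| ≤ L * dist x y)
    (R R' : Set (Fin d → ℝ)) (hRR' : R ⊆ R') (hR'cube : R' ⊆ Set.Icc 0 1)
    (hdiamR' : ∀ x ∈ R', ∀ y ∈ R', dist x y ≤ (2 : ℝ) ^ (1 - (ℓ : ℤ)))
    (hdiamR : ∀ x ∈ R, ∀ y ∈ R, dist x y ≤ (2 : ℝ) ^ (-(ℓ : ℤ)))
    (xb : Fin d → ℝ) (hxb : xb ∈ R') (pb : ℝ)
    (hacc : fs xb ≤ pb ∧ pb ≤ fb xb)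
    (pL pU : ℝ)
    (hpL : pL = max 0 (pb - L * (2 : ℝ) ^ (1 - (ℓ : ℤ))))
    (hpU : pU = min 1 (pb + L * (2 : ℝ) ^ (1 - (ℓ : ℤ))))
    (xL xU : Fin d → ℝ) (hxL : xL ∈ R) (hxU : xU ∈ R)
    (hrejL : ¬(fs xL ≤ pL ∧ pL ≤ fb xL))
    (hrejU : ¬(fs xU ≤ pU ∧ pU ≤ fb xU)) :
    ∀ x ∈ R, fb x - fs x ≤ 6 * L * (2 : ℝ) ^ (-(ℓ : ℤ)) := by
  intro x hx
  lift L to ℝ≥0 using hL.le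
  subst hpL hpU
  have hfs : LipschitzOnWith L fs (Set.Icc 0 1) := .of_dist_le_mul fun x hx y hy => by
    simpa only [Real.dist_eq] using (hlip x hx y hy).1
  have hfb : LipschitzOnWith L fb (Set.Icc 0 1) := .of_dist_le_mul fun x hx y hy => by
    simpa only [Real.dist_eq] using (hlip x hx y hy).2
  have hcube : ∀ y ∈ R, y ∈ Set.Icc 0 1 := fun y hy => hR'cube (hRR' hy)
  have hlow := lt_of_not_accept_lower_probe hfb (hcube xL hxL) (hR'cube hxb)
    (hdiamR' xb hxb xL (hRR' hxL)) hacc.2 (hrange xL (hcube xL hxL)).2.1 hrejL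
  have hup := lt_of_not_accept_upper_probe hfs (hcube xU hxU) (hR'cube hxb)
    (hdiamR' xU (hRR' hxU) xb hxb) hacc.1 (hrange xU (hcube xU hxU)).1.2 hrejU
  have hfbx := hfb.le_add_of_dist_le (hcube x hx) (hcube xU hxU) (hdiamR x hx xU hxU)
  have hfsx := hfs.le_add_of_dist_le (hcube xL hxL) (hcube x hx) (hdiamR xL hxL x hx)
  have hscale : (2 : ℝ) ^ (1 - (ℓ : ℤ)) = 2 * 2 ^ (-(ℓ : ℤ)) := by
    rw [sub_eq_add_neg, zpow_add₀ two_ne_zero, zpow_one]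
  rw [hscale] at hlow hup
  linarith

/-- Lemma 3.2, content of the `Reduce` routine.
`dist` on `Fin d → ℝ` is the sup metric.  `R ⊆ R' ⊆ [0,1]^d` with `diam R' ≤ 2^{1-ℓ}`
and `diam R ≤ 2^{-ℓ}`; the parent price `pb ∈ [0,1]` was accepted at some `xb ∈ R'`,
and both probe prices `pL = max(0, pb - L·2^{1-ℓ})`, `pU = min(1, pb + L·2^{1-ℓ})`
were rejected at contexts `xL, xU ∈ R`.  Then `fb x - fs x ≤ 6·L·2^{-ℓ}` on `R`. -/
theorem stmt_5 (d : ℕ) (hd : 1 ≤ d) (L : ℝ) (hL : 0 < L) (ℓ : ℕ) (hℓ : 1 ≤ ℓ)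
    (fs fb : (Fin d → ℝ) → ℝ)
    (hrange : ∀ x ∈ Set.Icc (0 : Fin d → ℝ) 1,
      fs x ∈ Set.Icc (0 : ℝ) 1 ∧ fb x ∈ Set.Icc (0 : ℝ) 1)
    (hlip : ∀ x ∈ Set.Icc (0 : Fin d → ℝ) 1, ∀ y ∈ Set.Icc (0 : Fin d → ℝ) 1,
      |fs x - fs y| ≤ L * dist x y ∧ |fb x - fb y| ≤ L * dist x y)
    (R R' : Set (Fin d → ℝ)) (hRR' : R ⊆ R') (hR'cube : R' ⊆ Set.Icc 0 1)
    (hdiamR' : ∀ x ∈ R', ∀ y ∈ R', dist x y ≤ (2 : ℝ) ^ (1 - (ℓ : ℤ)))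
    (hdiamR : ∀ x ∈ R, ∀ y ∈ R, dist x y ≤ (2 : ℝ) ^ (-(ℓ : ℤ)))
    (xb : Fin d → ℝ) (hxb : xb ∈ R') (pb : ℝ) (hpb : pb ∈ Set.Icc (0 : ℝ) 1)
    (hacc : fs xb ≤ pb ∧ pb ≤ fb xb)
    (pL pU : ℝ)
    (hpL : pL = max 0 (pb - L * (2 : ℝ) ^ (1 - (ℓ : ℤ))))
    (hpU : pU = min 1 (pb + L * (2 : ℝ) ^ (1 - (ℓ : ℤ))))
    (xL xU : Fin d → ℝ) (hxL : xL ∈ R) (hxU : xU ∈ R)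
    (hrejL : ¬(fs xL ≤ pL ∧ pL ≤ fb xL))
    (hrejU : ¬(fs xU ≤ pU ∧ pU ≤ fb xU)) :
    ∀ x ∈ R, fb x - fs x ≤ 6 * L * (2 : ℝ) ^ (-(ℓ : ℤ)) :=
  stmt_5_general d L hL ℓ fs fb hrange hlip R R' hRR' hR'cube hdiamR' hdiamR xb hxb pb hacc pL pU
    hpL hpU xL xU hxL hxU hrejL hrejU
end

section
/- Let d ≥ 1 be an integer, L > 0, ℓ ≥ 1 an integer, and equip ℝ^d with the sup metric d_∞(x,y) = max_i |x_i − y_i|. Let f_s, f_b : [0,1]^d → [0,1] be L-Lipschitz with respect to d_∞. Let R ⊆ R' ⊆ [0,1]^d be sets with d_∞-diameter of R' at most 2^{−(ℓ−1)} and d_∞-diameter of R at most 2^{−ℓ}. Suppose there exist x̄ ∈ R' and p̄ ∈ [0,1] with f_s(x̄) ≤ p̄ ≤ f_b(x̄). Let L̃ be a real with L ≤ L̃ ≤ 2L, and set p_L = max(0, p̄ − L̃·2^{−(ℓ−1)}) and p_U = min(1, p̄ + L̃·2^{−(ℓ−1)}). Suppose there exist x_L, x_U ∈ R such that not f_s(x_L)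 ≤ p_L ≤ f_b(x_L) and not f_s(x_U) ≤ p_U ≤ f_b(x_U). Then for every x ∈ R it holds that f_b(x) − f_s(x) ≤ 10·L·2^{−ℓ}. -/
/-! At the accepted context `x̄` the price `p̄` separates the two valuations, and every point
of `R` lies within `2^{1-ℓ}` of `x̄`. By Lipschitz continuity the buyer still values every point
of `R` above `p̄ - L̃ 2^{1-ℓ}`, so the lower probe can only be rejected at `x_L` because the
seller's value there exceeds `p̄ - L̃ 2^{1-ℓ}`; symmetrically the buyer's value at `x_U` is below
`p̄ + L̃ 2^{1-ℓ}`. Moving from `x_L` and `x_U` to an arbitrary `x ∈ R` costs `L 2^{-ℓ}` on each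
side, so the gain from trade at `x` is at most `4 L̃ 2^{-ℓ} + 2 L 2^{-ℓ} ≤ 10 L 2^{-ℓ}`. -/

section ProbePrices

variable {α : Type*} [PseudoMetricSpace α] {fs fb : α → ℝ} {L Lt r pb : ℝ} {xb y : α}

theorem lt_of_reject_lower_probe (hL : 0 ≤ L) (hLt : L ≤ Lt)
    (hlip : |fb xb - fb y| ≤ L * dist xb y) (hdist : dist xb y ≤ r) (hacc : pb ≤ fb xb)
    (hfb : 0 ≤ fb y) (hrej : ¬(fs y ≤ max 0 (pb - Lt * r) ∧ max 0 (pb - Lt * r) ≤ fb y)) :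
    pb - Lt * r < fs y := by
  have hr : 0 ≤ r := dist_nonneg.trans hdist
  have hle : max 0 (pb - Lt * r) ≤ fb y := by
    refine max_le hfb ?_
    linarith [(abs_le.mp hlip).2, mul_le_mul_of_nonneg_left hdist hL,
      mul_le_mul_of_nonneg_right hLt hr]
  exact (le_max_right _ _).trans_lt (lt_of_not_ge fun h => hrej ⟨h, hle⟩)

theorem lt_of_reject_upper_probe (hL : 0 ≤ L) (hLt : L ≤ Lt)
    (hlip : |fs xb - fs y| ≤ L * dist xb y) (hdist : dist xb y ≤ r) (hacc : fs xb ≤ pb)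
    (hfs : fs y ≤ 1) (hrej : ¬(fs y ≤ min 1 (pb + Lt * r) ∧ min 1 (pb + Lt * r) ≤ fb y)) :
    fb y < pb + Lt * r := by
  have hr : 0 ≤ r := dist_nonneg.trans hdist
  have hle : fs y ≤ min 1 (pb + Lt * r) := by
    refine le_min hfs ?_
    linarith [(abs_le.mp hlip).1, mul_le_mul_of_nonneg_left hdist hL,
      mul_le_mul_of_nonneg_right hLt hr]
  exact (lt_of_not_ge fun h => hrej ⟨hle, h⟩).trans_le (min_le_right _ _)

end ProbePrices

theorem sub_le_sub_add_of_abs_sub_le {α : Type*} [PseudoMetricSpace α] {fs fb : α → ℝ}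
    {L δ : ℝ} {x xs xb : α} (hL : 0 ≤ L)
    (hs : |fs xs - fs x| ≤ L * dist xs x) (hb : |fb xb - fb x| ≤ L * dist xb x)
    (hxs : dist xs x ≤ δ) (hxb : dist xb x ≤ δ) :
    fb x - fs x ≤ fb xb - fs xs + 2 * L * δ := by
  linarith [(abs_le.mp hs).2, (abs_le.mp hb).1, mul_le_mul_of_nonneg_left hxs hL,
    mul_le_mul_of_nonneg_left hxb hL]

theorem stmt_6_general (d : ℕ) (L : ℝ) (ℓ : ℕ)
    (fs fb : (Fin d → ℝ) → ℝ)
    (hrange : ∀ x ∈ Set.Icc (0 : Fin d → ℝ) 1,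
      fs x ∈ Set.Icc (0 : ℝ) 1 ∧ fb x ∈ Set.Icc (0 : ℝ) 1)
    (hlip : ∀ x ∈ Set.Icc (0 : Fin d → ℝ) 1, ∀ y ∈ Set.Icc (0 : Fin d → ℝ) 1,
      |fs x - fs y| ≤ L * dist x y ∧ |fb x - fb y| ≤ L * dist x y)
    (R R' : Set (Fin d → ℝ)) (hRR' : R ⊆ R') (hR'cube : R' ⊆ Set.Icc 0 1)
    (hdiamR' : ∀ x ∈ R', ∀ y ∈ R', dist x y ≤ (2 : ℝ) ^ (1 - (ℓ : ℤ)))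
    (hdiamR : ∀ x ∈ R, ∀ y ∈ R, dist x y ≤ (2 : ℝ) ^ (-(ℓ : ℤ)))
    (xb : Fin d → ℝ) (hxb : xb ∈ R') (pb : ℝ)
    (hacc : fs xb ≤ pb ∧ pb ≤ fb xb)
    (Lt : ℝ) (hLt : L ≤ Lt) (hLt2 : Lt ≤ 2 * L)
    (pL pU : ℝ)
    (hpL : pL = max 0 (pb - Lt * (2 : ℝ) ^ (1 - (ℓ : ℤ))))
    (hpU : pU = min 1 (pb + Lt * (2 : ℝ) ^ (1 - (ℓ : ℤ))))
    (xL xU : Fin d → ℝ) (hxL : xL ∈ R) (hxU : xU ∈ R)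
    (hrejL : ¬(fs xL ≤ pL ∧ pL ≤ fb xL))
    (hrejU : ¬(fs xU ≤ pU ∧ pU ≤ fb xU)) :
    ∀ x ∈ R, fb x - fs x ≤ 10 * L * (2 : ℝ) ^ (-(ℓ : ℤ)) := by
  intro x hx
  subst hpL hpU
  have hL : 0 ≤ L := by linarith
  have hcube : ∀ y ∈ R, y ∈ Set.Icc (0 : Fin d → ℝ) 1 := fun y hy => hR'cube (hRR' hy)
  have hxb_cube := hR'cube hxb
  have hlow := lt_of_reject_lower_probe hL hLt (hlip xb hxb_cube xL (hcube xL hxL)).2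
    (hdiamR' xb hxb xL (hRR' hxL)) hacc.2 (hrange xL (hcube xL hxL)).2.1 hrejL
  have hup := lt_of_reject_upper_probe hL hLt (hlip xb hxb_cube xU (hcube xU hxU)).1
    (hdiamR' xb hxb xU (hRR' hxU)) hacc.1 (hrange xU (hcube xU hxU)).1.2 hrejU
  have hgap := sub_le_sub_add_of_abs_sub_le hL (hlip xL (hcube xL hxL) x (hcube x hx)).1
    (hlip xU (hcube xU hxU) x (hcube x hx)).2 (hdiamR xL hxL x hx) (hdiamR xU hxU x hx)
  have hscale : (2 : ℝ) ^ (1 - (ℓ : ℤ)) = 2 * (2 : ℝ) ^ (-(ℓ : ℤ)) := by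
    rw [sub_eq_add_neg, zpow_add₀ two_ne_zero, zpow_one]
  rw [hscale] at hlow hup
  have hδ : (0 : ℝ) ≤ 2 ^ (-(ℓ : ℤ)) := zpow_nonneg zero_le_two _
  linarith [mul_le_mul_of_nonneg_right hLt2 hδ]

/-- claim underlying the `GeometricReduce` routine.
Same setting as the `Reduce` lemma, but the probe prices are built at a scale
`Lt` with `L ≤ Lt ≤ 2L`; a rejection of each of the two probe prices at contexts
in `R` bounds the gain from trade on `R` by `10·L·2^{-ℓ}`. -/
theorem stmt_6 (d : ℕ) (hd : 1 ≤ d) (L : ℝ) (hL : 0 < L) (ℓ : ℕ) (hℓ : 1 ≤ ℓ)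
    (fs fb : (Fin d → ℝ) → ℝ)
    (hrange : ∀ x ∈ Set.Icc (0 : Fin d → ℝ) 1,
      fs x ∈ Set.Icc (0 : ℝ) 1 ∧ fb x ∈ Set.Icc (0 : ℝ) 1)
    (hlip : ∀ x ∈ Set.Icc (0 : Fin d → ℝ) 1, ∀ y ∈ Set.Icc (0 : Fin d → ℝ) 1,
      |fs x - fs y| ≤ L * dist x y ∧ |fb x - fb y| ≤ L * dist x y)
    (R R' : Set (Fin d → ℝ)) (hRR' : R ⊆ R') (hR'cube : R' ⊆ Set.Icc 0 1)
    (hdiamR' : ∀ x ∈ R', ∀ y ∈ R', dist x y ≤ (2 : ℝ) ^ (1 - (ℓ : ℤ)))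
    (hdiamR : ∀ x ∈ R, ∀ y ∈ R, dist x y ≤ (2 : ℝ) ^ (-(ℓ : ℤ)))
    (xb : Fin d → ℝ) (hxb : xb ∈ R') (pb : ℝ) (hpb : pb ∈ Set.Icc (0 : ℝ) 1)
    (hacc : fs xb ≤ pb ∧ pb ≤ fb xb)
    (Lt : ℝ) (hLt : L ≤ Lt) (hLt2 : Lt ≤ 2 * L)
    (pL pU : ℝ)
    (hpL : pL = max 0 (pb - Lt * (2 : ℝ) ^ (1 - (ℓ : ℤ))))
    (hpU : pU = min 1 (pb + Lt * (2 : ℝ) ^ (1 - (ℓ : ℤ))))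
    (xL xU : Fin d → ℝ) (hxL : xL ∈ R) (hxU : xU ∈ R)
    (hrejL : ¬(fs xL ≤ pL ∧ pL ≤ fb xL))
    (hrejU : ¬(fs xU ≤ pU ∧ pU ≤ fb xU)) :
    ∀ x ∈ R, fb x - fs x ≤ 10 * L * (2 : ℝ) ^ (-(ℓ : ℤ)) :=
  stmt_6_general d L ℓ fs fb hrange hlip R R' hRR' hR'cube hdiamR' hdiamR xb hxb pb hacc Lt hLt hLt2
    pL pU hpL hpU xL xU hxL hxU hrejL hrejU
end

section
/- Let d ≥ 1, L > 0, h > 0, ε > 0, and equip ℝ^d with the sup metric d_∞(x,y) = max_i |x_i − y_i|. Let f_s, f_b : ℝ^d → ℝ be L-Lipschitz with respect to d_∞ and taking values in [0,1]. Suppose x̄, x ∈ ℝ^d satisfy d_∞(x, x̄) ≤ h, there is a price p̄ with f_s(x̄) ≤ p̄ ≤ f_b(x̄), and f_b(x) − f_s(x) ≥ ε. Let P be the projected ε-grid of [p̄ − L·h, p̄ + L·h], namely P = { clamp(p̄ − L·h + k·ε) : k ∈ ℕ, k ≤ ⌊2Lh/ε⌋ } ∪ { clamp(p̄ + L·h)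 }, where clamp(y) = min(1, max(0, y)). Then there exists p ∈ P with f_s(x) ≤ p ≤ f_b(x). -/
open Set

/- Some price is accepted at `x`, since `pb` was accepted at `xb` and the valuations move by at
most `L·h`, so the accepted interval `[fs x, fb x]` meets `[pb - L·h, pb + L·h]`. If it contains the
right endpoint we are done; otherwise it reaches above the left endpoint `pb - L·h` and, having
length at least `ε`, contains a grid point `pb - L·h + k·ε` with `k·ε < 2·L·h`. Clamping to `[0,1]`
keeps a point of `[fs x, fb x] ⊆ [0,1]` in place. -/

lemma min_one_max_zero_mem_Icc {s b t : ℝ} (hsb : Icc s b ⊆ Icc 0 1) (ht : t ∈ Icc s b) :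
    min 1 (max 0 t) ∈ Icc s b := by
  have h0 := (hsb ht).1
  have h1 := (hsb ht).2
  rwa [max_eq_right h0, min_eq_right h1]

lemma exists_nat_add_mul_mem_Icc {a s b ε : ℝ} (hε : 0 < ε) (hab : a ≤ b) (hgap : ε ≤ b - s) :
    ∃ k : ℕ, k * ε ≤ b - a ∧ a + k * ε ∈ Icc s b := by
  rcases le_or_gt s a with hsa | has
  · exact ⟨0, by simpa using hab, by simpa using ⟨hsa, hab⟩⟩
  · refine ⟨⌈(s - a) / ε⌉₊, ?_⟩
    have hk_ge : s - a ≤ ⌈(s - a) / ε⌉₊ * ε :=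
      (div_le_iff₀ hε).1 (Nat.le_ceil _)
    have hk_lt : ⌈(s - a) / ε⌉₊ * ε < s - a + ε := by
      have := Nat.ceil_lt_add_one (div_nonneg (sub_nonneg.2 has.le) hε.le)
      rwa [div_add_one hε.ne', lt_div_iff₀ hε] at this
    exact ⟨by linarith, by linarith, by linarith⟩

theorem stmt_8_general (d : ℕ) (L h ε : ℝ) (hL : 0 < L) (hε : 0 < ε)
    (fs fb : (Fin d → ℝ) → ℝ)
    (hfs : ∀ x y, |fs x - fs y| ≤ L * dist x y)
    (hfb : ∀ x y, |fb x - fb y| ≤ L * dist x y)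
    (hrange : ∀ x, fs x ∈ Set.Icc (0 : ℝ) 1 ∧ fb x ∈ Set.Icc (0 : ℝ) 1)
    (xb x : Fin d → ℝ) (hdist : dist x xb ≤ h)
    (pb : ℝ) (hacc : fs xb ≤ pb ∧ pb ≤ fb xb)
    (hgap : ε ≤ fb x - fs x) :
    ∃ p ∈ ({q : ℝ | ∃ k : ℕ, k ≤ ⌊2 * L * h / ε⌋₊ ∧
            q = min 1 (max 0 (pb - L * h + k * ε))} ∪
          {min 1 (max 0 (pb + L * h))}),
      fs x ≤ p ∧ p ≤ fb x := by
  have hLd : L * dist x xb ≤ L * h := mul_le_mul_of_nonneg_left hdist hL.le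
  have hs := abs_le.1 ((hfs x xb).trans hLd)
  have hb := abs_le.1 ((hfb x xb).trans hLd)
  have hsub : Icc (fs x) (fb x) ⊆ Icc 0 1 :=
    Icc_subset_Icc (hrange x).1.1 (hrange x).2.2
  rcases le_or_gt (pb + L * h) (fb x) with hright | hright
  · exact ⟨_, Or.inr rfl, min_one_max_zero_mem_Icc hsub ⟨by linarith, hright⟩⟩
  · obtain ⟨k, hk, hmem⟩ :=
      exists_nat_add_mul_mem_Icc (a := pb - L * h) hε (by linarith) hgap
    have hk_floor : k ≤ ⌊2 * L * h / ε⌋₊ :=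
      Nat.le_floor ((le_div_iff₀ hε).2 (by linarith))
    exact ⟨_, Or.inl ⟨k, hk_floor, rfl⟩, min_one_max_zero_mem_Icc hsub hmem⟩

/-- claim underlying the `Guess` routine.
`dist` on `Fin d → ℝ` is the sup metric.  If a price `pb` was accepted at a context
`xb` within sup-distance `h` of `x` and the gain from trade at `x` is at least `ε`,
then the projected `ε`-grid of `[pb - L·h, pb + L·h]` (each point clamped to `[0,1]`)
contains a price accepted by the valuations at `x`. -/
theorem stmt_8 (d : ℕ) (hd : 1 ≤ d) (L h ε : ℝ) (hL : 0 < L) (hh : 0 < h) (hε : 0 < ε)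
    (fs fb : (Fin d → ℝ) → ℝ)
    (hfs : ∀ x y, |fs x - fs y| ≤ L * dist x y)
    (hfb : ∀ x y, |fb x - fb y| ≤ L * dist x y)
    (hrange : ∀ x, fs x ∈ Set.Icc (0 : ℝ) 1 ∧ fb x ∈ Set.Icc (0 : ℝ) 1)
    (xb x : Fin d → ℝ) (hdist : dist x xb ≤ h)
    (pb : ℝ) (hacc : fs xb ≤ pb ∧ pb ≤ fb xb)
    (hgap : ε ≤ fb x - fs x) :
    ∃ p ∈ ({q : ℝ | ∃ k : ℕ, k ≤ ⌊2 * L * h / ε⌋₊ ∧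
            q = min 1 (max 0 (pb - L * h + k * ε))} ∪
          {min 1 (max 0 (pb + L * h))}),
      fs x ≤ p ∧ p ≤ fb x :=
  stmt_8_general d L h ε hL hε fs fb hfs hfb hrange xb x hdist pb hacc hgap
end

section
/- Let ε > 0 and let a ≤ b, s, b' be real numbers with 0 ≤ s, b' ≤ 1, b' − s ≥ ε, s ≤ b, and a ≤ b'. Let P = { clamp(a + k·ε) : k ∈ ℕ, k ≤ ⌊(b−a)/ε⌋ } ∪ { clamp(b) }, where clamp(y) = min(1, max(0, y)). Then there exists p ∈ P with s ≤ p ≤ b'. -/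
theorem min_max_eq_self_of_mem_Icc {α : Type*} [LinearOrder α] {lo hi y : α}
    (hy : y ∈ Set.Icc lo hi) : min hi (max lo y) = y := by
  rw [max_eq_right hy.1, min_eq_right hy.2]

/-- The first point `a + k ε` at or above `s` overshoots `s` by less than `ε`, unless it is `a`. -/
theorem exists_add_nat_mul_mem_Icc {ε a s t : ℝ} (hε : 0 < ε) (hat : a ≤ t)
    (hst : s + ε ≤ t) : ∃ k : ℕ, a + k * ε ∈ Set.Icc s t := by
  rcases le_or_gt s a with hsa | has
  · exact ⟨0, by simpa using ⟨hsa, hat⟩⟩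
  · refine ⟨⌈(s - a) / ε⌉₊, ?_, ?_⟩
    · have hceil := (div_le_iff₀ hε).1 (Nat.le_ceil ((s - a) / ε))
      linarith
    · have hceil := Nat.ceil_lt_add_one (div_nonneg (sub_nonneg.2 has.le) hε.le)
      have hlt := mul_lt_mul_of_pos_right hceil hε
      rw [add_mul, div_mul_cancel₀ _ hε.ne', one_mul] at hlt
      linarith

theorem stmt_9_general (ε a b s b' : ℝ) (hε : 0 < ε)
    (hs0 : 0 ≤ s) (hb'1 : b' ≤ 1)
    (hgap : ε ≤ b' - s) (hsb : s ≤ b) (hab' : a ≤ b') :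
    ∃ p ∈ ({q : ℝ | ∃ k : ℕ, k ≤ ⌊(b - a) / ε⌋₊ ∧
            q = min 1 (max 0 (a + k * ε))} ∪ {min 1 (max 0 b)}),
      s ≤ p ∧ p ≤ b' := by
  have hunit : Set.Icc s b' ⊆ Set.Icc 0 1 := Set.Icc_subset_Icc hs0 hb'1
  rcases le_or_gt b b' with hbb' | hb'b
  · have hb : b ∈ Set.Icc s b' := ⟨hsb, hbb'⟩
    exact ⟨_, Or.inr rfl, by rwa [min_max_eq_self_of_mem_Icc (hunit hb)]⟩
  · obtain ⟨k, hk⟩ := exists_add_nat_mul_mem_Icc (s := s) hε hab' (by linarith)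
    have hkb : k ≤ ⌊(b - a) / ε⌋₊ :=
      Nat.le_floor ((le_div_iff₀ hε).2 (by linarith [hk.2]))
    exact ⟨_, Or.inl ⟨k, hkb, rfl⟩, by rwa [min_max_eq_self_of_mem_Icc (hunit hk)]⟩

/-- the projected `ε`-grid hits long acceptance intervals.
The projected `ε`-grid of `[a,b]` is `{a, a+ε, …, a+⌊(b-a)/ε⌋·ε, b}` with every
point clamped to `[0,1]` via `clamp y = min 1 (max 0 y)`.  It contains a point of
any interval `[s, b'] ⊆ [0,1]` of length at least `ε` with `s ≤ b` and `a ≤ b'`. -/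
theorem stmt_9 (ε a b s b' : ℝ) (hε : 0 < ε) (hab : a ≤ b)
    (hs0 : 0 ≤ s) (hs1 : s ≤ 1) (hb'0 : 0 ≤ b') (hb'1 : b' ≤ 1)
    (hgap : ε ≤ b' - s) (hsb : s ≤ b) (hab' : a ≤ b') :
    ∃ p ∈ ({q : ℝ | ∃ k : ℕ, k ≤ ⌊(b - a) / ε⌋₊ ∧
            q = min 1 (max 0 (a + k * ε))} ∪ {min 1 (max 0 b)}),
      s ≤ p ∧ p ≤ b' :=
  stmt_9_general ε a b s b' hε hs0 hb'1 hgap hsb hab'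
end

section
/- Let N ≥ 1 be an integer. For every integer s ≥ N, let k(s) be the unique natural number with 2^{k(s)}·N ≤ s < 2^{k(s)+1}·N, and set q_s = 1/(2^{k(s)}·N) ∈ (0, 1]. Then ∑_{i=0}^{∞} ∏_{m=0}^{i−1} (1 − q_{N+m}) ≤ 4·N. (The left-hand side is the expected hitting time of the absorbing state 0 for the Markov chain on {0} ∪ {N, N+1, N+2, …} started at N which, from each state s ≥ N, moves to s + 1 with probability 1 − q_s and jumps to 0 with probability q_s.) -/
/-!
Split the states `s ≥ N` into the blocks `[2^c N, 2^{c+1} N)`. On block `c` the jump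
probability is at least `1/(2^c N)`, so the chain survives a whole block with probability at
most `(1 - 1/(2^c N))^{2^c N} ≤ e⁻¹ ≤ 3/8`. Hence the survival probability at every time of
block `c` is at most `(3/8)^c`, block `c` contributes at most `2^c N (3/8)^c = N (3/4)^c` to
the expected hitting time, and the total is at most `N ∑ (3/4)^c = 4 N`.
-/

open Finset

lemma one_sub_one_div_pow_le_three_div_eight {n : ℕ} (hn : n ≠ 0) :
    (1 - 1 / n : ℝ) ^ n ≤ 3 / 8 :=
  calc (1 - 1 / n : ℝ) ^ n ≤ Real.exp (-1) :=
        Real.one_sub_div_pow_le_exp_neg (by exact_mod_cast Nat.one_le_iff_ne_zero.2 hn)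
    _ ≤ 3 / 8 := by linarith [Real.exp_neg_one_lt_d9]

/-- Block `c` is the times `blockStart N c + j`, `j < 2^c N`, i.e. the states
`[2^c N, 2^{c+1} N)` shifted by `-N`. -/
def blockStart (N c : ℕ) : ℕ := (2 ^ c - 1) * N

lemma blockStart_zero (N : ℕ) : blockStart N 0 = 0 := by
  simp [blockStart]

lemma blockStart_add_self (N c : ℕ) : blockStart N c + N = 2 ^ c * N := by
  have := Nat.one_le_two_pow (n := c)
  simp only [blockStart, Nat.sub_mul, one_mul]
  have := Nat.le_mul_of_pos_left N (Nat.two_pow_pos c)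
  omega

lemma blockStart_succ (N c : ℕ) : blockStart N (c + 1) = blockStart N c + 2 ^ c * N := by
  have h := blockStart_add_self N c
  have h' := blockStart_add_self N (c + 1)
  rw [pow_succ, mul_right_comm] at h'
  omega

lemma le_blockStart_self {N : ℕ} (hN : N ≠ 0) (n : ℕ) : n ≤ blockStart N n :=
  calc n ≤ 2 ^ n - 1 := by have := n.lt_two_pow_self; omega
    _ ≤ blockStart N n := Nat.le_mul_of_pos_right _ (Nat.pos_of_ne_zero hN)

section Blocks

variable {N : ℕ} {b : ℕ → ℝ}

lemma prod_range_antitone (hb₀ : ∀ m, 0 ≤ b m) (hb₁ : ∀ m, b m ≤ 1) {i j : ℕ}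
    (hij : i ≤ j) : ∏ m ∈ range j, b m ≤ ∏ m ∈ range i, b m := by
  obtain ⟨d, rfl⟩ := Nat.exists_eq_add_of_le hij
  rw [prod_range_add]
  exact mul_le_of_le_one_right (prod_nonneg fun m _ => hb₀ m)
    (prod_le_one (fun m _ => hb₀ _) fun m _ => hb₁ _)

variable (hN : N ≠ 0) (hb₀ : ∀ m, 0 ≤ b m)
  (hblock : ∀ c j, j < 2 ^ c * N → b (blockStart N c + j) ≤ 1 - 1 / (2 ^ c * N))
include hN hb₀ hblock

lemma prod_block_le (c : ℕ) : ∏ j ∈ range (2 ^ c * N), b (blockStart N c + j) ≤ 3 / 8 :=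
  calc ∏ j ∈ range (2 ^ c * N), b (blockStart N c + j)
      ≤ ∏ _j ∈ range (2 ^ c * N), (1 - 1 / ((2 ^ c * N : ℕ) : ℝ)) :=
        prod_le_prod (fun j _ => hb₀ _) fun j hj => by
          exact_mod_cast hblock c j (mem_range.1 hj)
    _ ≤ 3 / 8 := by
        rw [prod_const, card_range]
        exact one_sub_one_div_pow_le_three_div_eight (by positivity)

lemma prod_range_blockStart_le (c : ℕ) :
    ∏ m ∈ range (blockStart N c), b m ≤ (3 / 8) ^ c := by
  induction c with
  | zero => simp [blockStart_zero]
  | succ c ih =>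
    rw [blockStart_succ, prod_range_add, pow_succ]
    exact mul_le_mul ih (prod_block_le hN hb₀ hblock c)
      (prod_nonneg fun j _ => hb₀ _) (by positivity)

variable (hb₁ : ∀ m, b m ≤ 1)
include hb₁

lemma sum_prod_range_blockStart_le (c : ℕ) :
    ∑ i ∈ range (blockStart N c), ∏ m ∈ range i, b m ≤ 4 * N * (1 - (3 / 4) ^ c) := by
  induction c with
  | zero => simp [blockStart_zero]
  | succ c ih =>
    have hblock_sum : ∑ j ∈ range (2 ^ c * N), ∏ m ∈ range (blockStart N c + j), b m
        ≤ N * (3 / 4) ^ c :=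
      calc ∑ j ∈ range (2 ^ c * N), ∏ m ∈ range (blockStart N c + j), b m
          ≤ ∑ _j ∈ range (2 ^ c * N), ((3 : ℝ) / 8) ^ c :=
            sum_le_sum fun j _ => (prod_range_antitone hb₀ hb₁ (Nat.le_add_right _ j)).trans
              (prod_range_blockStart_le hN hb₀ hblock c)
        _ = N * (3 / 4) ^ c := by
            rw [sum_const, card_range, nsmul_eq_mul, show (3 : ℝ) / 4 = 2 * (3 / 8) by norm_num,
              mul_pow]
            push_cast
            ring
    rw [blockStart_succ, sum_range_add]
    calc _ ≤ 4 * (N : ℝ) * (1 - (3 / 4) ^ c) + N * (3 / 4) ^ c := add_le_add ih hblock_sum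
      _ = 4 * N * (1 - (3 / 4) ^ (c + 1)) := by ring

lemma sum_prod_range_le (n : ℕ) : ∑ i ∈ range n, ∏ m ∈ range i, b m ≤ 4 * N :=
  calc ∑ i ∈ range n, ∏ m ∈ range i, b m
      ≤ ∑ i ∈ range (blockStart N n), ∏ m ∈ range i, b m :=
        sum_le_sum_of_subset_of_nonneg (range_subset_range.2 (le_blockStart_self hN n))
          fun i _ _ => prod_nonneg fun m _ => hb₀ m
    _ ≤ 4 * N * (1 - (3 / 4) ^ n) := sum_prod_range_blockStart_le hN hb₀ hblock hb₁ n
    _ ≤ 4 * N := mul_le_of_le_one_right (by positivity) (sub_le_self _ (by positivity))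

end Blocks

lemma le_of_two_pow_mul_lt_two_pow_succ_mul {N k c : ℕ} (h : 2 ^ k * N < 2 ^ (c + 1) * N) :
    k ≤ c :=
  Nat.lt_succ_iff.1 ((Nat.pow_lt_pow_iff_right (by norm_num)).1
    (lt_of_mul_lt_mul_right h N.zero_le))

/-- Markov-chain hitting-time bound, Claim C.2.
For `s ≥ N`, `k s` is the unique natural number with `2^{k s}·N ≤ s < 2^{k s + 1}·N`
and `q s = 1/(2^{k s}·N)`.  The expected hitting time of the absorbing state `0` for
the chain started at `N` that jumps from `s` to `0` with probability `q s` and to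
`s+1` otherwise equals `∑_{i≥0} ∏_{m<i} (1 - q (N+m))`, and is at most `4·N`. -/
theorem stmt_12 (N : ℕ) (hN : 1 ≤ N) (k : ℕ → ℕ)
    (hk : ∀ s : ℕ, N ≤ s → 2 ^ k s * N ≤ s ∧ s < 2 ^ (k s + 1) * N) :
    let q : ℕ → ℝ := fun s => 1 / ((2 : ℝ) ^ k s * (N : ℝ))
    Summable (fun i : ℕ => ∏ m ∈ Finset.range i, (1 - q (N + m))) ∧
      ∑' i : ℕ, ∏ m ∈ Finset.range i, (1 - q (N + m)) ≤ 4 * (N : ℝ) := by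
  intro q
  have hN₀ : N ≠ 0 := Nat.one_le_iff_ne_zero.1 hN
  have hNR : (1 : ℝ) ≤ N := by exact_mod_cast hN
  have hq₀ : ∀ s, 0 ≤ q s := fun s => by positivity
  have hq₁ : ∀ s, q s ≤ 1 := fun s =>
    div_le_one_of_le₀ (one_le_mul_of_one_le_of_one_le (one_le_pow₀ one_le_two) hNR)
      (by positivity)
  have hblock : ∀ c j, j < 2 ^ c * N →
      1 - q (N + (blockStart N c + j)) ≤ 1 - 1 / (2 ^ c * N) := by
    intro c j hj
    have hs : N + (blockStart N c + j) = 2 ^ c * N + j := by rw [← blockStart_add_self]; ring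
    obtain ⟨hlow, -⟩ :=
      hk _ (hs ▸ Nat.le_add_right_of_le (Nat.le_mul_of_pos_left N (by positivity)))
    have hkc : k (N + (blockStart N c + j)) ≤ c := le_of_two_pow_mul_lt_two_pow_succ_mul
      (hlow.trans_lt (by rw [hs, pow_succ, mul_right_comm]; omega))
    simp only [q]
    gcongr
    exact one_le_two
  have hpartial := sum_prod_range_le hN₀ (fun m => sub_nonneg.2 (hq₁ _)) hblock
    (fun m => sub_le_self _ (hq₀ _))
  have hnonneg : ∀ i, 0 ≤ ∏ m ∈ range i, (1 - q (N + m)) :=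
    fun i => prod_nonneg fun m _ => sub_nonneg.2 (hq₁ _)
  have hsum := summable_of_sum_range_le hnonneg hpartial
  exact ⟨hsum, hsum.tsum_le_of_sum_range_le hpartial⟩
end
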